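/- For every word u of length ℓ over a finite alphabet A, ζ(u) = max over 0 ≤ i < ℓ of max{ n ∈ ℕ | αⁿ(i) is defined and αⁿ(i) ≤ i + ℓ }, where α is the arch-jumping function of the word w = u·u. -/

import Mathlib

/-- The subword universality index `ι(u)`: the largest `k` such that every word of
length `k` over the alphabet `A` is a subword (subsequence) of `u`. -/
noncomputable def univIndex {A : Type*} (u : List A) : ℕ :=
  sSup {k : ℕ | ∀ w : List A, w.length = k → w.Sublist u}

/-- The circular subword universality index `ζ(u)`: the maximum of `ι(u')` over all
conjugates `u'` of `u` (equivalently, over all rotations of `u`). -/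
noncomputable def circIndex {A : Type*} (u : List A) : ℕ :=
  (Finset.range (u.length + 1)).sup fun i => univIndex (u.drop i ++ u.take i)

open Classical in
/-- The arch-jumping function `α` of a word `w`: `α(i)` is the least `j` such that the
factor `w(i,j)` contains every letter of the alphabet `A`, undefined if no such `j` exists. -/
noncomputable def alphaJump {A : Type*} (w : List A) (i : ℕ) : Option ℕ :=
  if ∃ j, ∀ a : A, a ∈ (w.take j).drop i then
    some (sInf {j : ℕ | ∀ a : A, a ∈ (w.take j).drop i})
  else none

/-- `αⁿ(i)`: the `n`-fold iteration of the arch-jumping function `α` of `w`, starting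
from position `i`; `none` if some intermediate step is undefined. -/
noncomputable def alphaIter {A : Type*} (w : List A) (n i : ℕ) : Option ℕ :=
  (fun o => o.bind (alphaJump w))^[n] (some i)

/-!
The universality index of a word `v` is the number of arches in its greedy arch factorisation,
i.e. the number of `α`-jumps of `v` starting from `0`: the letters closing the arches, followed by
a letter missing from the rest, spell a word one longer than that number which is not a subword
of `v`. The rotation of `u` starting at `i` is the factor `w(i, i + ℓ)` of `w = u·u`, and the
arch-jumping function of a factor is that of `w` shifted and cut off at the factor's end. The
rotation at `i = ℓ` repeats the one at `i = 0`.
-/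

theorem List.drop_eq_drop_take_append_drop {α : Type*} (l : List α) {m n : ℕ} (h : m ≤ n) :
    l.drop m = (l.take n).drop m ++ l.drop n := by
  obtain ⟨k, rfl⟩ := Nat.exists_eq_add_of_le h
  rw [← List.take_drop, List.drop_take_append_drop]

theorem List.sublist_tail_of_cons_sublist_append {α : Type*} {b : α} {y l₁ l₂ : List α}
    (hb : b ∉ l₁) (h : (b :: y).Sublist (l₁ ++ l₂)) : y.Sublist l₂.tail := by
  obtain ⟨l₁', l₂', heq, h₁, h₂⟩ := List.sublist_append_iff.mp h
  rcases l₁' with _ | ⟨c, l₁'⟩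
  · rw [List.nil_append] at heq
    subst heq
    exact h₂.tail
  · obtain ⟨rfl, -⟩ := List.cons_eq_cons.mp heq
    exact absurd (h₁.subset List.mem_cons_self) hb

theorem List.take_drop_append_self {α : Type*} {u : List α} {i : ℕ} (h : i ≤ u.length) :
    ((u ++ u).drop i).take u.length = u.drop i ++ u.take i := by
  rw [List.drop_append, Nat.sub_eq_zero_of_le h, List.drop_zero, List.take_append,
    List.take_of_length_le (by simp), List.length_drop, Nat.sub_sub_self h]

section ArchJumping

variable {A : Type*}

theorem alphaJump_eq_none_iff (w : List A) (i : ℕ) :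
    alphaJump w i = none ↔ ∃ a : A, a ∉ w.drop i := by
  unfold alphaJump
  split_ifs with h
  · obtain ⟨j, hj⟩ := h
    simpa using fun a => ((w.take_sublist j).drop i).subset (hj a)
  · push Not at h
    simpa using h w.length

theorem alphaJump_eq_some_iff (w : List A) (i j : ℕ) :
    alphaJump w i = some j ↔
      (∀ a : A, a ∈ (w.take j).drop i) ∧ ∀ j' < j, ∃ a : A, a ∉ (w.take j').drop i := by
  unfold alphaJump
  split_ifs with h
  · rw [Option.some_inj]
    constructor
    · rintro rfl
      exact ⟨Nat.sInf_mem h, fun j' hj' => by simpa using Nat.notMem_of_lt_sInf hj'⟩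
    · rintro ⟨hcov, hmin⟩
      refine le_antisymm (Nat.sInf_le hcov) (not_lt.mp fun hlt => ?_)
      obtain ⟨a, ha⟩ := hmin _ hlt
      exact ha (Nat.sInf_mem h a)
  · simp only [false_iff, not_and]
    exact fun hcov => (h ⟨j, hcov⟩).elim

theorem lt_of_alphaJump_eq_some [Nonempty A] {w : List A} {i j : ℕ}
    (h : alphaJump w i = some j) : i < j := by
  by_contra! hji
  have hcov := ((alphaJump_eq_some_iff w i j).mp h).1 (Classical.arbitrary A)
  simp [List.drop_eq_nil_of_le ((List.length_take_le j w).trans hji)] at hcov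

theorem alphaIter_zero (w : List A) (i : ℕ) : alphaIter w 0 i = some i := rfl

theorem alphaIter_succ (w : List A) (n i : ℕ) :
    alphaIter w (n + 1) i = (alphaJump w i).bind (alphaIter w n) := by
  rw [alphaIter, Function.iterate_succ_apply, Option.bind_some]
  cases alphaJump w i with
  | none => exact Function.iterate_fixed rfl n
  | some p => rfl

theorem add_le_of_alphaIter_eq_some [Nonempty A] {w : List A} {n i j : ℕ}
    (h : alphaIter w n i = some j) : i + n ≤ j := by
  induction n generalizing i with
  | zero => rw [alphaIter_zero, Option.some_inj] at h; omega
  | succ n ih =>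
    rw [alphaIter_succ, Option.bind_eq_some_iff] at h
    obtain ⟨p, hp, hj⟩ := h
    have := lt_of_alphaJump_eq_some hp
    have := ih hj
    omega

theorem alphaJump_drop [Nonempty A] (w : List A) (i q : ℕ) :
    (alphaJump (w.drop i) q).map (i + ·) = alphaJump w (i + q) := by
  cases h : alphaJump (w.drop i) q with
  | none =>
    rw [alphaJump_eq_none_iff, List.drop_drop] at h
    exact ((alphaJump_eq_none_iff w _).mpr h).symm
  | some j =>
    have hqj := lt_of_alphaJump_eq_some h
    simp only [alphaJump_eq_some_iff, List.take_drop, List.drop_drop] at h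
    rw [Option.map_some, eq_comm, alphaJump_eq_some_iff]
    refine ⟨h.1, fun j' hj' => ?_⟩
    obtain ⟨a, ha⟩ := h.2 (j' - i) (by omega)
    exact ⟨a, fun hmem => ha (((List.take_sublist_take_left (by omega)).drop _).subset hmem)⟩

theorem alphaIter_drop [Nonempty A] (w : List A) (i n q : ℕ) :
    (alphaIter (w.drop i) n q).map (i + ·) = alphaIter w n (i + q) := by
  induction n generalizing q with
  | zero => rfl
  | succ n ih =>
    simp only [alphaIter_succ, ← alphaJump_drop, Option.map_bind, Option.bind_map,
      Function.comp_def, ih]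

theorem alphaJump_take_eq_some_iff (w : List A) (L q j : ℕ) :
    alphaJump (w.take L) q = some j ↔ alphaJump w q = some j ∧ j ≤ L := by
  simp only [alphaJump_eq_some_iff, List.take_take]
  constructor
  · rintro ⟨hcov, hmin⟩
    have hjL : j ≤ L := by
      by_contra! hLj
      obtain ⟨a, ha⟩ := hmin L hLj
      exact ha (by simpa [min_eq_right hLj.le] using hcov a)
    refine ⟨⟨by simpa [min_eq_left hjL] using hcov, fun j' hj' => ?_⟩, hjL⟩
    simpa [min_eq_left (hj'.le.trans hjL)] using hmin j' hj'
  · rintro ⟨⟨hcov, hmin⟩, hjL⟩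
    refine ⟨by simpa [min_eq_left hjL] using hcov, fun j' hj' => ?_⟩
    simpa [min_eq_left (hj'.le.trans hjL)] using hmin j' hj'

theorem alphaIter_take_eq_some_iff [Nonempty A] (w : List A) {L q : ℕ} (hq : q ≤ L)
    (n j : ℕ) :
    alphaIter (w.take L) n q = some j ↔ alphaIter w n q = some j ∧ j ≤ L := by
  induction n generalizing q with
  | zero =>
    simp only [alphaIter_zero, Option.some_inj]
    constructor
    · rintro rfl
      exact ⟨rfl, hq⟩
    · exact And.left
  | succ n ih =>
    simp only [alphaIter_succ, Option.bind_eq_some_iff]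
    constructor
    · rintro ⟨p, hp, hj⟩
      obtain ⟨hp, hpL⟩ := (alphaJump_take_eq_some_iff w L q p).mp hp
      obtain ⟨hj, hjL⟩ := (ih hpL).mp hj
      exact ⟨⟨p, hp, hj⟩, hjL⟩
    · rintro ⟨⟨p, hp, hj⟩, hjL⟩
      have hpL : p ≤ L :=
        (Nat.le_add_right p n).trans ((add_le_of_alphaIter_eq_some hj).trans hjL)
      exact ⟨p, (alphaJump_take_eq_some_iff w L q p).mpr ⟨hp, hpL⟩,
        (ih hpL).mpr ⟨hj, hjL⟩⟩

theorem isSome_alphaIter_factor_iff [Nonempty A] (w : List A) (i L n : ℕ) :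
    (alphaIter ((w.drop i).take L) n 0).isSome ↔
      ∃ j, alphaIter w n i = some j ∧ j ≤ i + L := by
  have hdrop := alphaIter_drop w i n 0
  rw [add_zero] at hdrop
  simp only [Option.isSome_iff_exists, alphaIter_take_eq_some_iff _ (Nat.zero_le L), ← hdrop,
    Option.map_eq_some_iff]
  constructor
  · rintro ⟨j, hj, hjL⟩
    exact ⟨i + j, ⟨j, hj, rfl⟩, by omega⟩
  · rintro ⟨-, ⟨j, hj, rfl⟩, hjL⟩
    exact ⟨j, hj, by omega⟩

theorem forall_sublist_drop_succ_iff [Nonempty A] {v : List A} {p p₁ : ℕ}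
    (h : alphaJump v p = some p₁) (n : ℕ) :
    (∀ x : List A, x.length = n + 1 → x.Sublist (v.drop p)) ↔
      ∀ x : List A, x.length = n → x.Sublist (v.drop p₁) := by
  obtain ⟨hcov, hmin⟩ := (alphaJump_eq_some_iff v p p₁).mp h
  have hpp₁ := lt_of_alphaJump_eq_some h
  constructor
  · intro hall x hx
    -- some letter `b` occurs in the arch `v(p, p₁)` only at its last position
    obtain ⟨b, hb⟩ := hmin (p₁ - 1) (by omega)
    have hbx := hall (b :: x) (by simp [hx])
    rw [v.drop_eq_drop_take_append_drop (show p ≤ p₁ - 1 by omega)] at hbx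
    simpa [List.tail_drop, Nat.sub_add_cancel (by omega : 1 ≤ p₁)] using
      List.sublist_tail_of_cons_sublist_append hb hbx
  · rintro hall (_ | ⟨a, x⟩) hx
    · simp at hx
    · rw [v.drop_eq_drop_take_append_drop hpp₁.le]
      exact (List.singleton_sublist.mpr (hcov a)).append (hall x (by simpa using hx))

theorem forall_sublist_drop_iff_isSome_alphaIter [Nonempty A] (v : List A) (n p : ℕ) :
    (∀ x : List A, x.length = n → x.Sublist (v.drop p)) ↔ (alphaIter v n p).isSome := by
  induction n generalizing p with
  | zero => simp [alphaIter_zero, List.length_eq_zero_iff]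
  | succ n ih =>
    rw [alphaIter_succ]
    cases h : alphaJump v p with
    | none =>
      obtain ⟨c, hc⟩ := (alphaJump_eq_none_iff v p).mp h
      simp only [Option.bind_none, Option.isSome_none, Bool.false_eq_true, iff_false, not_forall]
      exact ⟨List.replicate (n + 1) c, List.length_replicate,
        fun hsub => hc (hsub.subset (by simp))⟩
    | some p₁ => rw [forall_sublist_drop_succ_iff h, ih, Option.bind_some]

theorem univIndex_eq_sSup_isSome_alphaIter [Nonempty A] (v : List A) :
    univIndex v = sSup {n | (alphaIter v n 0).isSome} := by
  simp only [univIndex, ← forall_sublist_drop_iff_isSome_alphaIter, List.drop_zero]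

theorem univIndex_drop_append_take [Nonempty A] (u : List A) {i : ℕ} (hi : i ≤ u.length) :
    univIndex (u.drop i ++ u.take i) =
      sSup {n | ∃ j, alphaIter (u ++ u) n i = some j ∧ j ≤ i + u.length} := by
  simp only [← List.take_drop_append_self hi, univIndex_eq_sSup_isSome_alphaIter,
    isSome_alphaIter_factor_iff]

theorem sSup_alphaIter_le [Nonempty A] (w : List A) (i L : ℕ) :
    sSup {n | ∃ j, alphaIter w n i = some j ∧ j ≤ i + L} ≤ L :=
  csSup_le' fun n ⟨_, hj, hjL⟩ => by
    have := add_le_of_alphaIter_eq_some hj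
    omega

end ArchJumping

theorem circIndex_via_alphaIter_general {A : Type*} [Nonempty A] (u : List A) :
    circIndex u =
      (Finset.range u.length).sup fun i =>
        sSup {n : ℕ | ∃ j, alphaIter (u ++ u) n i = some j ∧ j ≤ i + u.length} := by
  set F : ℕ → ℕ := fun i =>
    sSup {n : ℕ | ∃ j, alphaIter (u ++ u) n i = some j ∧ j ≤ i + u.length}
  have hF : ∀ i ≤ u.length, univIndex (u.drop i ++ u.take i) = F i :=
    fun i hi => univIndex_drop_append_take u hi
  have hlast : F u.length ≤ (Finset.range u.length).sup F := by
    rcases Nat.eq_zero_or_pos u.length with h0 | hpos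
    · exact (sSup_alphaIter_le (u ++ u) u.length u.length).trans (by omega)
    · calc F u.length = F 0 := by rw [← hF _ le_rfl, ← hF 0 (Nat.zero_le _)]; simp
        _ ≤ _ := Finset.le_sup (Finset.mem_range.mpr hpos)
  rw [circIndex, Finset.sup_congr rfl fun i hi => hF i (Finset.mem_range_succ_iff.mp hi),
    Finset.range_add_one, Finset.sup_insert, sup_eq_right.mpr hlast]

/-- `ζ(u) = max_{0 ≤ i < ℓ} max{ n | αⁿ(i) is defined and αⁿ(i) ≤ i + ℓ }`, where `α` is
the arch-jumping function of the word `w = u·u` and `ℓ = |u|`. -/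
theorem circIndex_via_alphaIter {A : Type*} [Fintype A] [Nonempty A] (u : List A) :
    circIndex u =
      (Finset.range u.length).sup fun i =>
        sSup {n : ℕ | ∃ j, alphaIter (u ++ u) n i = some j ∧ j ≤ i + u.length} :=
  circIndex_via_alphaIter_general u
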